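/- Let {a_I : I ∈ 𝒟⁺} be independent random variables, uniformly subgaussian with variance factor ν, with Σ_I E|a_I| < ∞, and let h_I be the Haar system on ℝ⁺. Then the random kernel K(x,y;ω) = Σ_I a_I(ω) h_I(x) h_I(y) satisfies ‖K(x,y;·)‖_{L²(Ω,P)} ≤ B/δ(x,y) for all x ≠ y in ℝ⁺ and some constant B depending only on ν and Σ_I E|a_I|. -/

import Mathlib

open MeasureTheory ProbabilityTheory Real

/-- The Haar mother wavelet `h = 1_{[0,1/2)} - 1_{[1/2,1)}`. -/
noncomputable def haarFun (t : ℝ) : ℝ :=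
  if 0 ≤ t ∧ t < 1 / 2 then 1 else if 1 / 2 ≤ t ∧ t < 1 then -1 else 0

/-- The Haar wavelet `h_I(x) = |I|^{-1/2} h((x - inf I)/|I|) = 2^{j/2} h(2^j x - k)`
associated to the dyadic interval `I = [k 2^{-j}, (k+1) 2^{-j}) ⊆ ℝ⁺`. -/
noncomputable def haarDyadic (j : ℤ) (k : ℕ) (x : ℝ) : ℝ :=
  (2 : ℝ) ^ ((j : ℝ) / 2) * haarFun ((2 : ℝ) ^ j * x - k)

/-- The dyadic interval `I^j_k = [k 2^{-j}, (k+1) 2^{-j}) ⊆ ℝ⁺`. -/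
noncomputable def dyadicInterval (j : ℤ) (k : ℕ) : Set ℝ :=
  Set.Ico ((k : ℝ) * (2 : ℝ) ^ (-j)) (((k : ℝ) + 1) * (2 : ℝ) ^ (-j))

/-- The dyadic distance on `ℝ⁺`: `δ(x,y) = inf {|I| : I ∈ 𝒟⁺, x ∈ I, y ∈ I}`. -/
noncomputable def dyadicDist (x y : ℝ) : ℝ :=
  sInf {r : ℝ | ∃ (j : ℤ) (k : ℕ), r = (2 : ℝ) ^ (-j)
    ∧ x ∈ dyadicInterval j k ∧ y ∈ dyadicInterval j k}

/-! The kernel is dominated pointwise by `∑_I |a_I| |h_I(x) h_I(y)|`. The product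
`|h_I(x) h_I(y)|` is at most `|I|⁻¹` and vanishes unless `x, y ∈ I`; at each scale at most one
such `I` exists, and it has length at least `δ(x,y)`, so the weights sum to at most
`∑_{2^{-j} ≥ δ} 2^j ≤ 2/δ(x,y)`. Hölder's inequality with these weights bounds `‖K(x,y;·)‖₂` by
`(2/δ) sup_I ‖a_I‖₂`, and `‖a_I‖₂ ≤ E|a_I| + ‖a_I - E a_I‖₂ ≤ ∑_J E|a_J| + 2 e^{ν/4}`: the last
bound follows from `t² ≤ 2 (eᵗ + e⁻ᵗ)` and the subgaussian bound `E e^{±(a_I - E a_I)} ≤ e^{ν/2}`.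
-/

open scoped ENNReal NNReal

theorem mem_dyadicInterval_iff {j : ℤ} {k : ℕ} {x : ℝ} :
    x ∈ dyadicInterval j k ↔ 0 ≤ 2 ^ j * x - k ∧ 2 ^ j * x - k < 1 := by
  have h : (0 : ℝ) < 2 ^ j := zpow_pos two_pos j
  simp only [dyadicInterval, Set.mem_Ico, zpow_neg, ← div_eq_mul_inv, div_le_iff₀ h,
    lt_div_iff₀ h, sub_nonneg, sub_lt_iff_lt_add', mul_comm x]

theorem eq_of_mem_dyadicInterval {j : ℤ} {k k' : ℕ} {x : ℝ} (hk : x ∈ dyadicInterval j k)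
    (hk' : x ∈ dyadicInterval j k') : k = k' := by
  rw [mem_dyadicInterval_iff] at hk hk'
  have h₁ : (k : ℝ) < k' + 1 := by linarith
  have h₂ : (k' : ℝ) < k + 1 := by linarith
  norm_cast at h₁ h₂
  omega

theorem haarDyadic_eq_zero {j : ℤ} {k : ℕ} {x : ℝ} (hx : x ∉ dyadicInterval j k) :
    haarDyadic j k x = 0 := by
  rw [mem_dyadicInterval_iff] at hx
  have : haarFun (2 ^ j * x - k) = 0 := by
    unfold haarFun
    split_ifs with h₁ h₂ <;> first | rfl | exact absurd ⟨by linarith, by linarith⟩ hx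
  rw [haarDyadic, this, mul_zero]

theorem abs_haarFun_le_one (t : ℝ) : |haarFun t| ≤ 1 := by
  unfold haarFun; split_ifs <;> norm_num

theorem abs_haarDyadic_mul_le (j : ℤ) (k : ℕ) (x y : ℝ) :
    |haarDyadic j k x * haarDyadic j k y| ≤ 2 ^ j := by
  have h2 : (0 : ℝ) < 2 ^ ((j : ℝ) / 2) := rpow_pos_of_pos two_pos _
  calc |haarDyadic j k x * haarDyadic j k y|
      ≤ (2 ^ ((j : ℝ) / 2) * 1) * (2 ^ ((j : ℝ) / 2) * 1) := by
        simp only [haarDyadic, abs_mul, abs_of_pos h2]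
        gcongr <;> exact abs_haarFun_le_one _
    _ = 2 ^ j := by rw [mul_one, ← rpow_add two_pos, add_halves, rpow_intCast]

theorem dyadicDist_le {x y : ℝ} {j : ℤ} {k : ℕ}
    (hx : x ∈ dyadicInterval j k) (hy : y ∈ dyadicInterval j k) :
    dyadicDist x y ≤ 2 ^ (-j) :=
  csInf_le ⟨0, by rintro r ⟨j', k', rfl, -⟩; positivity⟩ ⟨j, k, rfl, hx, hy⟩

theorem abs_sub_le_of_mem_dyadicInterval {x y : ℝ} {j : ℤ} {k : ℕ}
    (hx : x ∈ dyadicInterval j k) (hy : y ∈ dyadicInterval j k) : |x - y| ≤ 2 ^ (-j) := by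
  obtain ⟨hx₁, hx₂⟩ := hx
  obtain ⟨hy₁, hy₂⟩ := hy
  rw [abs_sub_le_iff]
  constructor <;> linarith

theorem exists_mem_dyadicInterval {x y : ℝ} (hx : 0 ≤ x) (hy : 0 ≤ y) :
    ∃ j k, x ∈ dyadicInterval j k ∧ y ∈ dyadicInterval j k := by
  obtain ⟨n, hn⟩ := exists_nat_gt (max x y)
  have hn2 : (n : ℝ) < 2 ^ (n : ℤ) := by
    rw [zpow_natCast]; exact_mod_cast Nat.lt_two_pow_self
  refine ⟨-n, 0, ?_, ?_⟩ <;>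
  · simp only [dyadicInterval, Set.mem_Ico, neg_neg, Nat.cast_zero, zero_mul, zero_add, one_mul]
    constructor
    · assumption
    · linarith [le_max_left x y, le_max_right x y]

theorem abs_sub_le_dyadicDist {x y : ℝ} (hx : 0 ≤ x) (hy : 0 ≤ y) : |x - y| ≤ dyadicDist x y := by
  obtain ⟨j, k, hxI, hyI⟩ := exists_mem_dyadicInterval hx hy
  refine le_csInf ⟨_, j, k, rfl, hxI, hyI⟩ ?_
  rintro r ⟨j', k', rfl, hx', hy'⟩
  exact abs_sub_le_of_mem_dyadicInterval hx' hy'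

theorem dyadicDist_pos {x y : ℝ} (hx : 0 ≤ x) (hy : 0 ≤ y) (hxy : x ≠ y) : 0 < dyadicDist x y :=
  (abs_pos.2 (sub_ne_zero.2 hxy)).trans_le (abs_sub_le_dyadicDist hx hy)

theorem tsum_ite_zpow_le_two_div {δ : ℝ} (hδ : 0 < δ) :
    ∑' j : ℤ, (if δ ≤ 2 ^ (-j) then ENNReal.ofReal (2 ^ j) else 0) ≤ ENNReal.ofReal (2 / δ) := by
  -- The nonzero terms are those with `j ≤ M`: a geometric series with sum `2 ^ (M + 1) ≤ 2 / δ`.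
  obtain ⟨M, hM, hM'⟩ := exists_mem_Ico_zpow (inv_pos.2 hδ) one_lt_two
  have hsupp : ∀ j : ℤ, δ ≤ 2 ^ (-j) → j ≤ M := fun j hj => by
    have : (2 : ℝ) ^ j < 2 ^ (M + 1) := by
      rw [zpow_neg] at hj
      exact ((le_inv_comm₀ hδ (zpow_pos two_pos j)).1 hj).trans_lt hM'
    exact Int.lt_add_one_iff.1 ((zpow_lt_zpow_iff_right₀ one_lt_two).1 this)
  have hinj : Function.Injective fun n : ℕ => M - n := fun m n h => by simpa using h
  have hrange : (Function.support fun j : ℤ =>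
      if δ ≤ 2 ^ (-j) then ENNReal.ofReal (2 ^ j) else 0) ⊆ Set.range fun n : ℕ => M - n := by
    intro j hj
    have := hsupp j (by by_contra h; exact hj (if_neg h))
    exact ⟨(M - j).toNat, show M - ((M - j).toNat : ℤ) = j by omega⟩
  rw [← hinj.tsum_eq hrange]
  calc ∑' n : ℕ, (if δ ≤ 2 ^ (-(M - n)) then ENNReal.ofReal (2 ^ (M - n)) else 0)
      ≤ ∑' n : ℕ, ENNReal.ofReal (2 ^ M) * 2⁻¹ ^ n := by
        refine ENNReal.tsum_le_tsum fun n => ?_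
        split_ifs
        · rw [zpow_sub₀ two_ne_zero, div_eq_mul_inv, ENNReal.ofReal_mul (by positivity),
            zpow_natCast, ← inv_pow, ENNReal.ofReal_pow (by positivity),
            ENNReal.ofReal_inv_of_pos two_pos, ENNReal.ofReal_ofNat]
        · exact zero_le
    _ = ENNReal.ofReal (2 ^ M * 2) := by
        rw [ENNReal.tsum_mul_left, ENNReal.tsum_geometric, ENNReal.one_sub_inv_two, inv_inv,
          ENNReal.ofReal_mul (by positivity), ENNReal.ofReal_ofNat]
    _ ≤ ENNReal.ofReal (2 / δ) := by
        gcongr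
        rw [div_eq_inv_mul]
        linarith

theorem tsum_nat_enorm_haarDyadic_mul_le {x y : ℝ} (j : ℤ) :
    ∑' k : ℕ, ‖haarDyadic j k x * haarDyadic j k y‖ₑ ≤
      if dyadicDist x y ≤ 2 ^ (-j) then ENNReal.ofReal (2 ^ j) else 0 := by
  by_cases h : ∃ k, x ∈ dyadicInterval j k ∧ y ∈ dyadicInterval j k
  · obtain ⟨k₀, hx, hy⟩ := h
    rw [if_pos (dyadicDist_le hx hy), tsum_eq_single k₀ fun k hk => by
      rw [haarDyadic_eq_zero fun hk' => hk (eq_of_mem_dyadicInterval hk' hx), zero_mul, enorm_zero]]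
    rw [Real.enorm_eq_ofReal_abs]
    exact ENNReal.ofReal_le_ofReal (abs_haarDyadic_mul_le j k₀ x y)
  · simp only [not_exists, not_and] at h
    refine (ENNReal.tsum_eq_zero.2 fun k => ?_).trans_le zero_le
    by_cases hx : x ∈ dyadicInterval j k
    · simp [haarDyadic_eq_zero (h k hx)]
    · simp [haarDyadic_eq_zero hx]

theorem tsum_enorm_haarDyadic_mul_le {x y : ℝ} (hx : 0 ≤ x) (hy : 0 ≤ y) (hxy : x ≠ y) :
    ∑' p : ℤ × ℕ, ‖haarDyadic p.1 p.2 x * haarDyadic p.1 p.2 y‖ₑ ≤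
      ENNReal.ofReal (2 / dyadicDist x y) :=
  calc ∑' p : ℤ × ℕ, ‖haarDyadic p.1 p.2 x * haarDyadic p.1 p.2 y‖ₑ
      = ∑' (j : ℤ) (k : ℕ), ‖haarDyadic j k x * haarDyadic j k y‖ₑ := ENNReal.tsum_prod'
    _ ≤ ∑' j : ℤ, if dyadicDist x y ≤ 2 ^ (-j) then ENNReal.ofReal (2 ^ j) else 0 :=
        ENNReal.tsum_le_tsum tsum_nat_enorm_haarDyadic_mul_le
    _ ≤ ENNReal.ofReal (2 / dyadicDist x y) :=
        tsum_ite_zpow_le_two_div (dyadicDist_pos hx hy hxy)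

theorem ENNReal.inner_le_weight_mul_Lp_tsum {ι : Type*} {p : ℝ} (hp : 1 ≤ p) (w f : ι → ℝ≥0∞) :
    ∑' i, w i * f i ≤ (∑' i, w i) ^ (1 - p⁻¹) * (∑' i, w i * f i ^ p) ^ p⁻¹ := by
  have hp' : 0 ≤ 1 - p⁻¹ := sub_nonneg.2 (inv_le_one_of_one_le₀ hp)
  rw [ENNReal.tsum_eq_iSup_sum]
  refine iSup_le fun s => (ENNReal.inner_le_weight_mul_Lp_of_nonneg s hp w f).trans ?_
  gcongr
  · exact ENNReal.sum_le_tsum s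
  · exact ENNReal.sum_le_tsum s

theorem eLpNorm_tsum_smul_le {Ω ι E : Type*} [MeasurableSpace Ω] [Countable ι]
    [NormedAddCommGroup E] [NormedSpace ℝ E] {μ : Measure Ω} {p : ℝ≥0} (hp : 1 ≤ p)
    (c : ι → ℝ) {f : ι → Ω → E} (hf : ∀ i, AEStronglyMeasurable (f i) μ) {M : ℝ≥0∞}
    (hM : ∀ i, eLpNorm (f i) p μ ≤ M) :
    eLpNorm (fun ω => ∑' i, c i • f i ω) p μ ≤ (∑' i, ‖c i‖ₑ) * M := by
  set W := ∑' i, ‖c i‖ₑ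
  have hp₀ : (0 : ℝ) < p := zero_lt_one.trans_le hp
  have hp₁ : (1 : ℝ) ≤ p := hp
  have hpointwise : ∀ ω, ‖∑' i, c i • f i ω‖ₑ ^ (p : ℝ) ≤
      W ^ ((p : ℝ) - 1) * ∑' i, ‖c i‖ₑ * ‖f i ω‖ₑ ^ (p : ℝ) := fun ω =>
    calc ‖∑' i, c i • f i ω‖ₑ ^ (p : ℝ)
        ≤ (∑' i, ‖c i‖ₑ * ‖f i ω‖ₑ) ^ (p : ℝ) := by
          gcongr
          simpa only [enorm_smul] using enorm_tsum_le_tsum_enorm (f := fun i => c i • f i ω)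
      _ ≤ (W ^ (1 - (p : ℝ)⁻¹) * (∑' i, ‖c i‖ₑ * ‖f i ω‖ₑ ^ (p : ℝ)) ^ (p : ℝ)⁻¹) ^ (p : ℝ) := by
          gcongr
          exact ENNReal.inner_le_weight_mul_Lp_tsum hp₁ _ _
      _ = W ^ ((p : ℝ) - 1) * ∑' i, ‖c i‖ₑ * ‖f i ω‖ₑ ^ (p : ℝ) := by
          rw [ENNReal.mul_rpow_of_nonneg _ _ hp₀.le, ← ENNReal.rpow_mul, ← ENNReal.rpow_mul,
            sub_mul, one_mul, inv_mul_cancel₀ hp₀.ne', ENNReal.rpow_one]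
  rw [← ENNReal.rpow_le_rpow_iff hp₀, eLpNorm_nnreal_pow_eq_lintegral (by positivity)]
  calc ∫⁻ ω, ‖∑' i, c i • f i ω‖ₑ ^ (p : ℝ) ∂μ
      ≤ ∫⁻ ω, W ^ ((p : ℝ) - 1) * ∑' i, ‖c i‖ₑ * ‖f i ω‖ₑ ^ (p : ℝ) ∂μ := lintegral_mono hpointwise
    _ = W ^ ((p : ℝ) - 1) * ∑' i, ‖c i‖ₑ * eLpNorm (f i) p μ ^ (p : ℝ) := by
        have hmeas : ∀ i, AEMeasurable (fun ω => ‖c i‖ₑ * ‖f i ω‖ₑ ^ (p : ℝ)) μ := fun i =>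
          ((hf i).enorm.pow_const _).const_mul _
        rw [lintegral_const_mul'' _ (AEMeasurable.tsum hmeas), lintegral_tsum hmeas]
        refine congrArg _ (tsum_congr fun i => ?_)
        rw [lintegral_const_mul'' _ ((hf i).enorm.pow_const _),
          eLpNorm_nnreal_pow_eq_lintegral (by positivity)]
    _ ≤ W ^ ((p : ℝ) - 1) * (W * M ^ (p : ℝ)) := by
        rw [← ENNReal.tsum_mul_right]
        gcongr with i
        exact hM i
    _ = (W * M) ^ (p : ℝ) := by
        rw [← mul_assoc, ENNReal.mul_rpow_of_nonneg _ _ hp₀.le]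
        nth_rewrite 2 [← ENNReal.rpow_one W]
        rw [← ENNReal.rpow_add_of_nonneg _ _ (by linarith) zero_le_one, sub_add_cancel]

theorem sq_le_two_mul_exp_add_exp_neg (t : ℝ) : t ^ 2 ≤ 2 * (exp t + exp (-t)) := by
  have hquad := quadratic_le_exp_of_nonneg (abs_nonneg t)
  have habs : exp |t| ≤ exp t + exp (-t) := by
    rcases abs_cases t with ⟨h, -⟩ | ⟨h, -⟩ <;> rw [h] <;> linarith [exp_pos t, exp_pos (-t)]
  nlinarith [sq_abs t, abs_nonneg t]

theorem eLpNorm_two_le_sqrt_integral_exp_add_exp_neg {Ω : Type*} [MeasurableSpace Ω]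
    {μ : Measure Ω} {X : Ω → ℝ} (h₁ : Integrable (fun ω => exp (X ω)) μ)
    (h₂ : Integrable (fun ω => exp (-X ω)) μ) :
    eLpNorm X 2 μ ≤ ENNReal.ofReal √(2 * (∫ ω, exp (X ω) ∂μ + ∫ ω, exp (-X ω) ∂μ)) := by
  have hint : Integrable (fun ω => 2 * (exp (X ω) + exp (-X ω))) μ := (h₁.add h₂).const_mul 2
  have hsq : ∫⁻ ω, ‖X ω‖ₑ ^ (2 : ℝ) ∂μ ≤
      ENNReal.ofReal (2 * (∫ ω, exp (X ω) ∂μ + ∫ ω, exp (-X ω) ∂μ)) := by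
    rw [← integral_add h₁ h₂, ← integral_const_mul,
      ofReal_integral_eq_lintegral_ofReal hint (.of_forall fun ω => by positivity)]
    refine lintegral_mono fun ω => ?_
    rw [Real.enorm_eq_ofReal_abs, ENNReal.ofReal_rpow_of_nonneg (abs_nonneg _) zero_le_two,
      rpow_two, sq_abs]
    exact ENNReal.ofReal_le_ofReal (sq_le_two_mul_exp_add_exp_neg _)
  rw [eLpNorm_eq_lintegral_rpow_enorm_toReal two_ne_zero ENNReal.ofNat_ne_top,
    ENNReal.toReal_ofNat, sqrt_eq_rpow, ← ENNReal.ofReal_rpow_of_nonneg (by positivity)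
      (by norm_num)]
  gcongr

theorem ProbabilityTheory.HasSubgaussianMGF.of_cgf_le {Ω : Type*} [MeasurableSpace Ω]
    {μ : Measure Ω} [NeZero μ] {X : Ω → ℝ} {c : ℝ≥0}
    (hint : ∀ t, Integrable (fun ω => exp (t * X ω)) μ) (hcgf : ∀ t, cgf X μ t ≤ c * t ^ 2 / 2) :
    HasSubgaussianMGF X c μ :=
  ⟨hint, fun t => exp_cgf (hint t) ▸ exp_le_exp.2 (hcgf t)⟩

theorem ProbabilityTheory.HasSubgaussianMGF.eLpNorm_two_le {Ω : Type*} [MeasurableSpace Ω]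
    {μ : Measure Ω} {X : Ω → ℝ} {c : ℝ≥0} (h : HasSubgaussianMGF X c μ) :
    eLpNorm X 2 μ ≤ ENNReal.ofReal (2 * exp (c / 4)) := by
  have h₁ : Integrable (fun ω => exp (X ω)) μ := by simpa using h.integrable_exp_mul 1
  have h₂ : Integrable (fun ω => exp (-X ω)) μ := by simpa using h.integrable_exp_mul (-1)
  have hm₁ : ∫ ω, exp (X ω) ∂μ ≤ exp (c / 2) := by simpa [mgf] using h.mgf_le 1
  have hm₂ : ∫ ω, exp (-X ω) ∂μ ≤ exp (c / 2) := by simpa [mgf] using h.mgf_le (-1)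
  have hsq : (2 * exp (c / 4)) ^ 2 = 2 * (exp (c / 2) + exp (c / 2)) := by
    rw [mul_pow, ← exp_nat_mul]; ring_nf
  refine (eLpNorm_two_le_sqrt_integral_exp_add_exp_neg h₁ h₂).trans ?_
  rw [← sqrt_sq (by positivity : 0 ≤ 2 * exp (c / 4)), hsq]
  gcongr

theorem eLpNorm_two_le_integral_abs_add_of_hasSubgaussianMGF {Ω : Type*} [MeasurableSpace Ω]
    {μ : Measure Ω} [IsProbabilityMeasure μ] {X : Ω → ℝ} {c : ℝ≥0}
    (h : HasSubgaussianMGF (fun ω => X ω - ∫ ω', X ω' ∂μ) c μ) :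
    eLpNorm X 2 μ ≤ ENNReal.ofReal (∫ ω, |X ω| ∂μ + 2 * exp (c / 4)) := by
  have hX : X = fun ω => (X ω - ∫ ω', X ω' ∂μ) + ∫ ω', X ω' ∂μ := by simp
  calc eLpNorm X 2 μ
      ≤ eLpNorm (fun ω => X ω - ∫ ω', X ω' ∂μ) 2 μ + eLpNorm (fun _ => ∫ ω', X ω' ∂μ) 2 μ := by
        nth_rewrite 1 [hX]
        exact eLpNorm_add_le h.aestronglyMeasurable aestronglyMeasurable_const one_le_two
    _ ≤ ENNReal.ofReal (2 * exp (c / 4)) + ENNReal.ofReal (∫ ω, |X ω| ∂μ) := by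
        gcongr
        · exact h.eLpNorm_two_le
        · rw [eLpNorm_const _ two_ne_zero (NeZero.ne μ), measure_univ, ENNReal.one_rpow, mul_one,
            Real.enorm_eq_ofReal_abs]
          exact ENNReal.ofReal_le_ofReal abs_integral_le_integral_abs
    _ = ENNReal.ofReal (∫ ω, |X ω| ∂μ + 2 * exp (c / 4)) := by
        rw [add_comm, ENNReal.ofReal_add (integral_nonneg fun _ => abs_nonneg _) (by positivity)]

theorem random_haar_kernel_size_general
    {Ω : Type*} [MeasureSpace Ω] [IsProbabilityMeasure (ℙ : Measure Ω)]
    (a : ℤ × ℕ → Ω → ℝ) (ν : ℝ) (hν : 0 < ν)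
    (habs : Summable (fun I => ∫ ω, |a I ω| ∂ℙ))
    (hmgf : ∀ I, ∀ l : ℝ,
      Integrable (fun ω => exp (l * (a I ω - ∫ w, a I w ∂ℙ))) ℙ)
    (hsub : ∀ I, ∀ l : ℝ,
      log (∫ ω, exp (l * (a I ω - ∫ w, a I w ∂ℙ)) ∂ℙ) ≤ l ^ 2 * ν / 2) :
    ∃ B : ℝ, 0 < B ∧ ∀ x y : ℝ, 0 ≤ x → 0 ≤ y → x ≠ y →
      eLpNorm (fun ω =>
          ∑' p : ℤ × ℕ, a p ω * haarDyadic p.1 p.2 x * haarDyadic p.1 p.2 y) 2 ℙ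
        ≤ ENNReal.ofReal (B / dyadicDist x y) := by
  set S := ∑' I, ∫ ω, |a I ω| ∂ℙ
  have hS : 0 ≤ S := tsum_nonneg fun I => integral_nonneg fun _ => abs_nonneg _
  have hsg : ∀ I, HasSubgaussianMGF (fun ω => a I ω - ∫ w, a I w ∂ℙ) ⟨ν, hν.le⟩ ℙ := fun I =>
    .of_cgf_le (hmgf I) fun l => (hsub I l).trans_eq (by rw [mul_comm (l ^ 2)]; rfl)
  have hL2 : ∀ I, eLpNorm (a I) 2 ℙ ≤ ENNReal.ofReal (S + 2 * exp (ν / 4)) := fun I =>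
    (eLpNorm_two_le_integral_abs_add_of_hasSubgaussianMGF (hsg I)).trans <|
      ENNReal.ofReal_le_ofReal <|
        add_le_add (habs.le_tsum I fun J _ => integral_nonneg fun _ => abs_nonneg _) le_rfl
  refine ⟨2 * (S + 2 * exp (ν / 4)), by positivity, fun x y hx hy hxy => ?_⟩
  have hK : (fun ω => ∑' p : ℤ × ℕ, a p ω * haarDyadic p.1 p.2 x * haarDyadic p.1 p.2 y) =
      fun ω => ∑' p : ℤ × ℕ, (haarDyadic p.1 p.2 x * haarDyadic p.1 p.2 y) • a p ω := by
    simp only [smul_eq_mul, mul_comm, mul_left_comm]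
  calc eLpNorm (fun ω => ∑' p : ℤ × ℕ, a p ω * haarDyadic p.1 p.2 x * haarDyadic p.1 p.2 y) 2 ℙ
      ≤ (∑' p : ℤ × ℕ, ‖haarDyadic p.1 p.2 x * haarDyadic p.1 p.2 y‖ₑ) *
          ENNReal.ofReal (S + 2 * exp (ν / 4)) :=
        hK ▸ eLpNorm_tsum_smul_le (p := 2) one_le_two _
          (fun I => by simpa using (hsg I).aestronglyMeasurable.add_const (∫ w, a I w ∂ℙ)) hL2
    _ ≤ ENNReal.ofReal (2 / dyadicDist x y) * ENNReal.ofReal (S + 2 * exp (ν / 4)) := by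
        gcongr
        exact tsum_enorm_haarDyadic_mul_le hx hy hxy
    _ = ENNReal.ofReal (2 * (S + 2 * exp (ν / 4)) / dyadicDist x y) := by
        rw [← ENNReal.ofReal_mul (div_nonneg zero_le_two (dyadicDist_pos hx hy hxy).le),
          div_mul_eq_mul_div]

/-- The random Haar kernel `K(x,y;ω) = Σ_I a_I(ω) h_I(x) h_I(y)` satisfies the
Calderón–Zygmund size estimate `‖K(x,y;·)‖_{L²(Ω,P)} ≤ B / δ(x,y)` with respect to the
dyadic distance, when the `a_I` are independent, uniformly subgaussian with variance
factor `ν`, and `Σ_I E|a_I| < ∞`. -/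
theorem random_haar_kernel_size
    {Ω : Type*} [MeasureSpace Ω] [IsProbabilityMeasure (ℙ : Measure Ω)]
    (a : ℤ × ℕ → Ω → ℝ) (ν : ℝ) (hν : 0 < ν)
    (hind : iIndepFun a ℙ)
    (hint : ∀ I, Integrable (a I) ℙ)
    (habs : Summable (fun I => ∫ ω, |a I ω| ∂ℙ))
    (hmgf : ∀ I, ∀ l : ℝ,
      Integrable (fun ω => exp (l * (a I ω - ∫ w, a I w ∂ℙ))) ℙ)
    (hsub : ∀ I, ∀ l : ℝ,
      log (∫ ω, exp (l * (a I ω - ∫ w, a I w ∂ℙ)) ∂ℙ) ≤ l ^ 2 * ν / 2) :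
    ∃ B : ℝ, 0 < B ∧ ∀ x y : ℝ, 0 ≤ x → 0 ≤ y → x ≠ y →
      eLpNorm (fun ω =>
          ∑' p : ℤ × ℕ, a p ω * haarDyadic p.1 p.2 x * haarDyadic p.1 p.2 y) 2 ℙ
        ≤ ENNReal.ofReal (B / dyadicDist x y) :=
  random_haar_kernel_size_general a ν hν habs hmgf hsub
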